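/- Let M be a manifold with vector fields X, X⊥, V, let W, Q ∈ C^∞(M, ℝ), fix λ₀ ∈ ℝ, and on M × ℝ (coordinate E on the second factor) set ℋ₁(q,E) = λ₀ − W(q) − E·Q(q) and define the vector field 𝒳 := (λ₀ − W) X + Ω_{ℋ₁} + E·X(ℋ₁) ∂_E, where Ω_f = V(f)X⊥ − X⊥(f)V (acting in the q variable, with E treated as a parameter). Then 𝒳(ℋ₁) = ℋ₁ · X(ℋ₁), and consequently on the open set {E ≠ 0} the function ℋ₊(q,E) = ℋ₁(q,E)/E satisfies 𝒳(ℋ₊) = 0; i.e. 𝒳 is tangent to every level set ℋ₊⁻¹(c). -/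
import Mathlib


namespace Stmt13

variable {R : Type*} [CommRing R] [Algebra ℝ R]

/-- The contact-plane vector field `Ω_f = V(f)·X⊥ − X⊥(f)·V` applied to `g`. -/
def Omega (Xperp V : Derivation ℝ R R) (f g : R) : R :=
  V f * Xperp g - Xperp f * V g

/-- With `ℋ₁(·,E) = λ₀ − W − E·Q` and the vector field
`𝒳 = (λ₀ − W) X + Ω_{ℋ₁} + E·X(ℋ₁) ∂_E` on `M × ℝ`, one has `𝒳(ℋ₁) = ℋ₁ · X(ℋ₁)`
(the `∂_E`-derivative of `ℋ₁` being `−Q`), and on `{E ≠ 0}` the function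
`ℋ₊ = ℋ₁/E` satisfies `𝒳(ℋ₊) = 0` (its `∂_E`-derivative being `−E⁻²·ℋ₁ − E⁻¹·Q`);
i.e. `𝒳` is tangent to every level set of `ℋ₊`. -/
theorem X_tangent_to_levels (X Xperp V : Derivation ℝ R R) (W Q : R) (lam0 : ℝ) :
    (∀ E : ℝ,
        (algebraMap ℝ R lam0 - W) * X (algebraMap ℝ R lam0 - W - E • Q)
          + Omega Xperp V (algebraMap ℝ R lam0 - W - E • Q) (algebraMap ℝ R lam0 - W - E • Q)
          + E • (X (algebraMap ℝ R lam0 - W - E • Q) * (-Q))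
        = (algebraMap ℝ R lam0 - W - E • Q) * X (algebraMap ℝ R lam0 - W - E • Q)) ∧
    (∀ E : ℝ, E ≠ 0 →
        (algebraMap ℝ R lam0 - W) * X (E⁻¹ • (algebraMap ℝ R lam0 - W - E • Q))
          + Omega Xperp V (algebraMap ℝ R lam0 - W - E • Q)
              (E⁻¹ • (algebraMap ℝ R lam0 - W - E • Q))
          + E • (X (algebraMap ℝ R lam0 - W - E • Q)
              * ((-(E⁻¹ ^ 2)) • (algebraMap ℝ R lam0 - W - E • Q) + E⁻¹ • (-Q)))
        = 0) := by
  constructor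
  · intro E
    unfold Omega
    simp only [Algebra.smul_def]
    ring
  · intro E hE
    have key : algebraMap ℝ R E * algebraMap ℝ R E⁻¹ = 1 := by
      rw [← map_mul, mul_inv_cancel₀ hE, map_one]
    unfold Omega
    simp only [Derivation.map_smul]
    simp only [Algebra.smul_def, map_pow, map_neg, map_inv₀]
    set h := X ((algebraMap ℝ R) lam0 - W - (algebraMap ℝ R) E * Q) with hh
    linear_combination (-(algebraMap ℝ R E⁻¹) * (algebraMap ℝ R lam0 - W) * h
      + algebraMap ℝ R E * algebraMap ℝ R E⁻¹ * Q * h) * key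

end Stmt13
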